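/- For every integer n ≥ 2, the number of cyclic permutations of length n avoiding all three cyclic patterns [1234], [1324], and [1423] equals n−1; that is, #Av_n([1234],[1324],[1423]) = n−1. -/

import Mathlib

/-- A sequence `σ` of length `n` (with distinct values) contains the pattern `π`
of length `k` if some subsequence of `σ` is order isomorphic to `π`. -/
def ContainsPat {n k : ℕ} (σ : Fin n → Fin n) (π : Fin k → ℕ) : Prop :=
  ∃ f : Fin k → Fin n, StrictMono f ∧ ∀ i j : Fin k, π i < π j ↔ σ (f i) < σ (f j)

/-- The rotation of the sequence `σ` starting at position `r`. -/
def rotSeq {n : ℕ} (σ : Fin n → Fin n) (r : Fin n) : Fin n → Fin n :=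
  fun i => σ (i + r)

/-- The cyclic permutation `[σ]` contains the cyclic pattern `[π]` if some
rotation of `σ` contains `π` linearly. -/
def CycContains {n k : ℕ} (σ : Fin n → Fin n) (π : Fin k → ℕ) : Prop :=
  ∃ r : Fin n, ContainsPat (rotSeq σ r) π

/-- The cyclic permutation `[σ]` avoids the cyclic pattern `[π]`. -/
def CycAvoids {n k : ℕ} (σ : Fin n → Fin n) (π : Fin k → ℕ) : Prop :=
  ¬ CycContains σ π

/-- The cyclic permutation `[σ]`, i.e. the set of all rotations of `σ`. -/
def CycClass {n : ℕ} (σ : Fin n → Fin n) : Set (Fin n → Fin n) :=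
  Set.range (rotSeq σ)

/-- The set of cyclic permutations (rotation classes) of length `n` all of whose
representatives are permutations and which satisfy the (rotation-invariant)
predicate `P`. -/
def AvClasses (n : ℕ) (P : (Fin n → Fin n) → Prop) : Set (Set (Fin n → Fin n)) :=
  { C | ∃ σ : Equiv.Perm (Fin n), C = CycClass ⇑σ ∧ P ⇑σ }

/-- The cyclic descent number: the number of indices `i` (mod `n`) with
`σ i > σ (i+1)`. -/
def cdes {n : ℕ} (σ : Fin n → Fin n) : ℕ :=
  (Finset.univ.filter fun i : Fin n =>
    σ ⟨(↑i + 1) % n, Nat.mod_lt _ i.pos⟩ < σ i).card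

/-- The cyclic peak number: the number of indices `i` (mod `n`) with
`σ (i-1) < σ i > σ (i+1)`. -/
def cpk {n : ℕ} (σ : Fin n → Fin n) : ℕ :=
  (Finset.univ.filter fun i : Fin n =>
    σ ⟨(↑i + (n - 1)) % n, Nat.mod_lt _ i.pos⟩ < σ i ∧
    σ ⟨(↑i + 1) % n, Nat.mod_lt _ i.pos⟩ < σ i).card

/-!
Every rotation class of permutations has exactly one representative `τ` with `τ 0 = 0`.
If `τ` had an ascent `τ c < τ d` at positions `2 ≤ c < d`, then `τ 0, τ 1, τ c, τ d` would form
a `1234`, `1324` or `1423` according to where `τ 1` falls relative to `τ c < τ d`. So `τ` is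
`0, k, (the other values in decreasing order)`, determined by `k = τ 1 ∈ {1, …, n-1}`.
Conversely, in such a `τ` every ascent `τ i < τ j` with `i < j` starts at position `0` or `1`,
and none with `j < i` ends at position `0`; no rotation then has room for the two disjoint
ascents `π 0 < π 1` and `π 2 < π 3` with which `1234`, `1324` and `1423` all begin.
-/

open Function Set

theorem Function.Bijective.eq_of_eqOn_of_strictAntiOn_compl {α β : Type*} [LinearOrder α]
    [Finite α] [Preorder β] {f g : α → β} (hf : Bijective f) (hg : Bijective g) {s : Set α}
    (hs : s.EqOn f g) (hfs : StrictAntiOn f sᶜ) (hgs : StrictAntiOn g sᶜ) : f = g := by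
  have hrange : range (fun x : ↥sᶜ => f x) = range (fun x : ↥sᶜ => g x) := by
    rw [← image_eq_range, ← image_eq_range, image_compl_eq hf, image_compl_eq hg, hs.image_eq]
  have hcompl := ((strictAntiOn_iff_strictAnti.mp hfs).range_inj
    (strictAntiOn_iff_strictAnti.mp hgs)).mp hrange
  funext x
  by_cases hx : x ∈ s
  · exact hs hx
  · exact congrFun hcompl ⟨x, hx⟩

section Rotation

variable {n : ℕ}

theorem rotSeq_rotSeq (σ : Fin n → Fin n) (r s : Fin n) :
    rotSeq (rotSeq σ r) s = rotSeq σ (s + r) := by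
  funext i
  simp only [rotSeq, add_assoc]

variable [NeZero n]

theorem rotSeq_zero (σ : Fin n → Fin n) : rotSeq σ 0 = σ := by
  funext i
  simp [rotSeq]

theorem cycClass_rotSeq (σ : Fin n → Fin n) (r : Fin n) : CycClass (rotSeq σ r) = CycClass σ := by
  ext τ
  constructor
  · rintro ⟨s, rfl⟩
    exact ⟨s + r, (rotSeq_rotSeq σ r s).symm⟩
  · rintro ⟨t, rfl⟩
    exact ⟨t - r, by rw [rotSeq_rotSeq, sub_add_cancel]⟩

theorem eq_of_cycClass_eq {σ τ : Fin n → Fin n} (hσ : Injective σ) (h0 : σ 0 = τ 0)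
    (h : CycClass σ = CycClass τ) : σ = τ := by
  obtain ⟨r, hr⟩ : τ ∈ CycClass σ := h ▸ ⟨0, rotSeq_zero τ⟩
  have hr0 : r = 0 := hσ (by rw [h0, ← hr, rotSeq, zero_add])
  rw [← hr, hr0, rotSeq_zero]

end Rotation

/-- The sequence `0, k, n-1, n-2, …, 1` with the value `k` omitted from the decreasing tail. -/
def anchoredSeq {n : ℕ} (k i : Fin n) : Fin n :=
  if h0 : i.val = 0 then ⟨0, i.pos⟩
  else if h1 : i.val = 1 then k
  else if k.val < n + 1 - i.val then ⟨n + 1 - i.val, by omega⟩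
  else ⟨n - i.val, by omega⟩

section Anchored

variable {n : ℕ} (k : Fin n)

theorem anchoredSeq_val (i : Fin n) :
    (anchoredSeq k i).val =
      if i.val = 0 then 0 else if i.val = 1 then k.val
      else if k.val < n + 1 - i.val then n + 1 - i.val else n - i.val := by
  unfold anchoredSeq
  split_ifs <;> rfl

theorem anchoredSeq_of_val_eq_one {i : Fin n} (hi : i.val = 1) : anchoredSeq k i = k := by
  ext
  rw [anchoredSeq_val]
  split_ifs <;> omega

theorem anchoredSeq_zero [NeZero n] : anchoredSeq k 0 = 0 := by
  ext
  simp [anchoredSeq_val]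

theorem anchoredSeq_strictAntiOn : StrictAntiOn (anchoredSeq k) {i | i.val < 2}ᶜ := by
  intro i hi j hj hij
  simp only [mem_compl_iff, mem_ofPred_eq, not_lt] at hi hj
  rw [Fin.lt_def] at hij ⊢
  rw [anchoredSeq_val, anchoredSeq_val]
  split_ifs <;> omega

theorem anchoredSeq_bijective [NeZero n] (hk : k ≠ 0) : Bijective (anchoredSeq k) := by
  have hk := Fin.val_ne_zero_iff.mpr hk
  refine Finite.injective_iff_bijective.mp fun i j h => ?_
  have hv := congrArg Fin.val h
  rw [anchoredSeq_val, anchoredSeq_val] at hv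
  ext
  split_ifs at hv <;> omega

end Anchored

section Patterns

variable {n : ℕ}

theorem containsPat_of_lt_of_lt_of_lt {σ : Fin n → Fin n} {π : Fin 4 → ℕ} {a b c d : Fin n}
    (hab : a < b) (hbc : b < c) (hcd : c < d)
    (h : ∀ i j, π i < π j ↔ σ (![a, b, c, d] i) < σ (![a, b, c, d] j)) : ContainsPat σ π := by
  refine ⟨![a, b, c, d], fun i j hij => ?_, h⟩
  fin_cases i <;> fin_cases j <;> simp at hij ⊢ <;> omega

theorem cyclic_order_of_strictMono_add (f : Fin 4 → Fin n) (hf : StrictMono f) (r : Fin n)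
    (p : Fin 4 → Fin n) (hp : ∀ i, p i = f i + r) :
    ((p 0).val < (p 1).val ∧ (p 1).val < (p 2).val ∧ (p 2).val < (p 3).val) ∨
    ((p 1).val < (p 2).val ∧ (p 2).val < (p 3).val ∧ (p 3).val < (p 0).val) ∨
    ((p 2).val < (p 3).val ∧ (p 3).val < (p 0).val ∧ (p 0).val < (p 1).val) ∨
    ((p 3).val < (p 0).val ∧ (p 0).val < (p 1).val ∧ (p 1).val < (p 2).val) := by
  have hshift : ∀ i, (f i).val + r.val < n ∧ (p i).val = (f i).val + r.val ∨
      n ≤ (f i).val + r.val ∧ (p i).val = (f i).val + r.val - n := by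
    intro i
    rw [hp, Fin.val_add]
    have := (f i).isLt
    have := r.isLt
    rcases Nat.lt_or_ge ((f i).val + r.val) n with h | h
    · exact Or.inl ⟨h, Nat.mod_eq_of_lt h⟩
    · exact Or.inr ⟨h, by rw [Nat.mod_eq_sub_mod h, Nat.mod_eq_of_lt (by omega)]⟩
  have h01 : (f 0).val < (f 1).val := hf (by decide)
  have h12 : (f 1).val < (f 2).val := hf (by decide)
  have h23 : (f 2).val < (f 3).val := hf (by decide)
  have := (f 3).isLt
  have := hshift 0
  have := hshift 1
  have := hshift 2
  have := hshift 3
  omega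

variable [NeZero n]

theorem cycAvoids_of_strictAntiOn {τ : Fin n → Fin n} (hmin : ∀ i, τ 0 ≤ τ i)
    (hanti : StrictAntiOn τ {i | i.val < 2}ᶜ) {π : Fin 4 → ℕ} (h01 : π 0 < π 1)
    (h23 : π 2 < π 3) : CycAvoids τ π := by
  rintro ⟨r, f, hf, hπ⟩
  have hasc : ∀ i j : Fin n, i.val < j.val → τ i < τ j → i.val < 2 := fun i j hij h => by
    by_contra hi
    exact (hanti (by simpa using hi) (by simp; omega) hij).not_gt h
  have hpos : ∀ i j : Fin n, τ i < τ j → j.val ≠ 0 := fun i j h hj =>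
    (hmin i).not_gt (by rwa [show j = 0 from Fin.ext hj] at h)
  set p : Fin 4 → Fin n := fun i => f i + r
  have hp01 : τ (p 0) < τ (p 1) := (hπ 0 1).mp h01
  have hp23 : τ (p 2) < τ (p 3) := (hπ 2 3).mp h23
  have := hpos _ _ hp01
  have := hpos _ _ hp23
  rcases cyclic_order_of_strictMono_add f hf r p fun _ => rfl with h | h | h | h
  · have := hasc _ _ h.2.2 hp23
    omega
  · have := hasc _ _ h.2.1 hp23
    omega
  · have := hasc _ _ h.2.2 hp01
    omega
  · have := hasc _ _ h.2.1 hp01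
    omega

theorem strictAntiOn_of_avoids {τ : Fin n → Fin n} (hτ : Injective τ) (hmin : ∀ i, τ 0 ≤ τ i)
    (h1234 : ¬ ContainsPat τ ![1,2,3,4]) (h1324 : ¬ ContainsPat τ ![1,3,2,4])
    (h1423 : ¬ ContainsPat τ ![1,4,2,3]) : StrictAntiOn τ {i | i.val < 2}ᶜ := by
  intro c hc d hd hcd
  simp only [mem_compl_iff, mem_ofPred_eq, not_lt] at hc hd
  by_contra hle
  have hcd' : τ c < τ d := (not_lt.mp hle).lt_of_ne (hτ.ne hcd.ne)
  set o : Fin n := ⟨1, by omega⟩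
  have h0o : τ 0 < τ o := (hmin o).lt_of_ne (hτ.ne (by simp [Fin.ext_iff, o]))
  have h0c : τ 0 < τ c := (hmin c).lt_of_ne (hτ.ne (by simp [Fin.ext_iff]; omega))
  have hoc : τ o ≠ τ c := hτ.ne (by simp [Fin.ext_iff, o]; omega)
  have hod : τ o ≠ τ d := hτ.ne (by simp [Fin.ext_iff, o]; omega)
  have hquad : ∀ π : Fin 4 → ℕ,
      (∀ i j, π i < π j ↔ τ (![0, o, c, d] i) < τ (![0, o, c, d] j)) → ContainsPat τ π :=
    fun _ => containsPat_of_lt_of_lt_of_lt (by simp [Fin.lt_def, o])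
      (by simp [Fin.lt_def, o]; omega) hcd
  rcases hoc.lt_or_gt with hoc | hco
  · exact h1234 (hquad _ (by simp only [Fin.forall_fin_succ]; simp; omega))
  rcases hod.lt_or_gt with hod | hdo
  · exact h1324 (hquad _ (by simp only [Fin.forall_fin_succ]; simp; omega))
  · exact h1423 (hquad _ (by simp only [Fin.forall_fin_succ]; simp; omega))

theorem eq_anchoredSeq_of_strictAntiOn (hn : 1 < n) {τ : Fin n → Fin n} (hτ : Bijective τ)
    (h0 : τ 0 = 0) (hanti : StrictAntiOn τ {i | i.val < 2}ᶜ) : τ = anchoredSeq (τ ⟨1, hn⟩) := by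
  have hk : τ ⟨1, hn⟩ ≠ 0 := h0 ▸ hτ.injective.ne (by simp [Fin.ext_iff])
  refine hτ.eq_of_eqOn_of_strictAntiOn_compl (anchoredSeq_bijective _ hk)
    (fun i hi => ?_) hanti (anchoredSeq_strictAntiOn _)
  rcases (show i.val = 0 ∨ i.val = 1 by simp at hi; omega) with hi | hi
  · rw [show i = 0 from Fin.ext hi, h0, anchoredSeq_zero]
  · rw [anchoredSeq_of_val_eq_one _ hi, show i = ⟨1, hn⟩ from Fin.ext hi]

end Patterns

section Counting

variable {n : ℕ} [NeZero n]

theorem avClasses_eq_image (hn : 1 < n) :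
    AvClasses n (fun σ => CycAvoids σ ![1,2,3,4] ∧ CycAvoids σ ![1,3,2,4] ∧
      CycAvoids σ ![1,4,2,3]) = (fun k => CycClass (anchoredSeq k)) '' {0}ᶜ := by
  ext C
  constructor
  · rintro ⟨σ, rfl, h1234, h1324, h1423⟩
    set τ := rotSeq σ (σ.symm 0)
    have hτ : Bijective τ := σ.bijective.comp (Equiv.addRight _).bijective
    have h0 : τ 0 = 0 := by simp [τ, rotSeq]
    have hanti : StrictAntiOn τ {i | i.val < 2}ᶜ :=
      strictAntiOn_of_avoids hτ.injective (fun i => by rw [h0]; exact Fin.zero_le _)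
        (fun h => h1234 ⟨_, h⟩) (fun h => h1324 ⟨_, h⟩) (fun h => h1423 ⟨_, h⟩)
    refine ⟨τ ⟨1, hn⟩, h0 ▸ hτ.injective.ne (by simp [Fin.ext_iff]), ?_⟩
    change CycClass (anchoredSeq (τ ⟨1, hn⟩)) = CycClass σ
    rw [← eq_anchoredSeq_of_strictAntiOn hn hτ h0 hanti, cycClass_rotSeq]
  · rintro ⟨k, hk, rfl⟩
    have hmin : ∀ i, anchoredSeq k 0 ≤ anchoredSeq k i := fun i => by
      rw [anchoredSeq_zero]; exact Fin.zero_le _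
    have hanti := anchoredSeq_strictAntiOn k
    exact ⟨Equiv.ofBijective _ (anchoredSeq_bijective k hk), rfl,
      cycAvoids_of_strictAntiOn hmin hanti (by decide) (by decide),
      cycAvoids_of_strictAntiOn hmin hanti (by decide) (by decide),
      cycAvoids_of_strictAntiOn hmin hanti (by decide) (by decide)⟩

theorem cycClass_anchoredSeq_injOn (hn : 1 < n) :
    InjOn (fun k => CycClass (anchoredSeq k)) ({0}ᶜ : Set (Fin n)) := by
  intro k₁ hk₁ k₂ _ h
  have heq : anchoredSeq k₁ = anchoredSeq k₂ :=
    eq_of_cycClass_eq (anchoredSeq_bijective k₁ hk₁).injective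
      (by rw [anchoredSeq_zero, anchoredSeq_zero]) h
  simpa only [anchoredSeq_of_val_eq_one _ (rfl : (⟨1, hn⟩ : Fin n).val = 1)] using
    congrFun heq ⟨1, hn⟩

end Counting

theorem card_av_1234_1324_1423 (n : ℕ) (hn : 2 ≤ n) :
    (AvClasses n fun σ => CycAvoids σ ![1,2,3,4] ∧ CycAvoids σ ![1,3,2,4] ∧ CycAvoids σ ![1,4,2,3]).ncard = n - 1 := by
  have : NeZero n := ⟨by omega⟩
  rw [avClasses_eq_image hn, (cycClass_anchoredSeq_injOn hn).ncard_image, ncard_compl,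
    ncard_singleton, Nat.card_eq_fintype_card, Fintype.card_fin]
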